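/- arXiv:1302.4015 — 3 statements merged into one kernel-verified Lean document; each statement's English description precedes it below -/
import Mathlib

section
/- Let V be a finite-dimensional real vector space with a fixed rational structure (i.e. V = V_Q ⊗_Q ℝ for a Q-vector space V_Q). Let P ∈ V and let W be the smallest rational affine subspace of V containing P (the intersection of all affine subspaces spanned by elements of V_Q that contain P). If the linear span U of W strictly contains W (i.e. W is not a linear subspace), then P can be written as P = Σ_{i=1}^n r_i P_i where P_i ∈ W ∩ V_Q, the r_i are positive reals, and n = dim W + 1. Moreover, the coefficients r_1, …, r_n are linearly independent over Q. -/
/-!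
Choose affinely independent rational points `Q₀, …, Q_d` spanning `W` (so `d = dim W`) and write
`P = ∑ wᵢ Qᵢ` with `∑ wᵢ = 1`. Dilating the `Qᵢ` by a large integer factor about their centroid
keeps them rational and in `W` and makes every `wᵢ` positive. If `∑ gᵢ wᵢ = 0` with `gᵢ ∈ ℚ` and
`g` not constant, the affine function on `W` taking the value `gᵢ` at `Qᵢ` vanishes at `P`, and
its zero set is spanned by rational points of `W`; minimality of `W` forces this function to
vanish identically, i.e. `g = 0`. A constant `g` is `0` because `∑ wᵢ = 1`.
-/

open Finset Set

section Affine

variable {k V V₂ ι : Type*} [CommRing k] [AddCommGroup V] [Module k V]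
  [AddCommGroup V₂] [Module k V₂] [Fintype ι]

theorem sum_smul_mem_affineSpan [Nontrivial k] (p : ι → V) {w : ι → k} (hw : ∑ i, w i = 1) :
    ∑ i, w i • p i ∈ affineSpan k (range p) := by
  rw [← univ.affineCombination_eq_linear_combination p w hw]
  exact affineCombination_mem_affineSpan hw p

theorem exists_sum_smul_eq_of_mem_affineSpan {p : ι → V} {x : V}
    (hx : x ∈ affineSpan k (range p)) : ∃ w : ι → k, ∑ i, w i = 1 ∧ x = ∑ i, w i • p i := by
  obtain ⟨w, hw, rfl⟩ := eq_affineCombination_of_mem_affineSpan_of_fintype hx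
  exact ⟨w, hw, univ.affineCombination_eq_linear_combination p w hw⟩

theorem AffineMap.map_sum_smul (f : V →ᵃ[k] V₂) (p : ι → V) {w : ι → k}
    (hw : ∑ i, w i = 1) : f (∑ i, w i • p i) = ∑ i, w i • f (p i) := by
  rw [← univ.affineCombination_eq_linear_combination p w hw, univ.map_affineCombination p w hw,
    univ.affineCombination_eq_linear_combination _ w hw, Function.comp_def]

/-- Read `g` as the affine function on the span of `Q` with value `g i` at `Q i`: if it vanishes
at the points `∑ i, b l i • Q i`, it vanishes on their affine span. -/
theorem AffineIndependent.eq_zero_of_mem_affineSpan {κ : Type*} [Fintype κ] {Q : ι → V}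
    (hQ : AffineIndependent k Q) {b : κ → ι → k} (hb : ∀ l, ∑ i, b l i = 1) {g : ι → k}
    (hg : ∀ l, ∑ i, g i * b l i = 0) {i₀ : ι}
    (h : Q i₀ ∈ affineSpan k (range fun l => ∑ i, b l i • Q i)) : g i₀ = 0 := by
  classical
  obtain ⟨u, hu, hQu⟩ := exists_sum_smul_eq_of_mem_affineSpan h
  set a : ι → k := fun i => ∑ l, u l * b l i
  have ha : ∑ i, a i = ∑ i, (Pi.single i₀ 1 : ι → k) i := by
    simp [a, sum_comm (γ := ι), ← mul_sum, hb, hu]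
  have haQ : ∑ i, a i • Q i = ∑ i, (Pi.single i₀ 1 : ι → k) i • Q i := by
    simp only [a, sum_smul, mul_smul]
    rw [sum_comm]
    simp [← smul_sum, ← hQu, Pi.single_apply]
  have ha₀ : a = Pi.single i₀ 1 := funext fun i => hQ.eq_of_sum_eq_sum ha haQ i (mem_univ i)
  calc g i₀ = ∑ i, g i * a i := by simp [ha₀, Pi.single_apply]
    _ = ∑ l, u l * ∑ i, g i * b l i := by
      simp only [a, mul_sum, sum_comm (γ := ι)]
      exact sum_congr rfl fun _ _ => sum_congr rfl fun _ _ => by ring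
    _ = 0 := by simp [hg]

end Affine

theorem exists_affineIndependent_fin {k V : Type*} [Field k] [AddCommGroup V] [Module k V]
    [FiniteDimensional k V] (s : Set V) :
    ∃ (m : ℕ) (Q : Fin m → V), AffineIndependent k Q ∧ range Q ⊆ s ∧
      affineSpan k (range Q) = affineSpan k s := by
  obtain ⟨t, hts, hspan, ht⟩ := exists_affineIndependent k V s
  have := (finite_set_of_fin_dim_affineIndependent k ht).fintype
  let e := (Fintype.equivFin t).symm
  have hrange : range (Subtype.val ∘ e) = t := by
    rw [e.surjective.range_comp, Subtype.range_coe]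
  refine ⟨_, _, (affineIndependent_equiv e).mpr ht, ?_, ?_⟩ <;> rw [hrange]
  exacts [hts, hspan]

theorem exists_nat_forall_pos {ι : Type*} [Fintype ι] (w : ι → ℝ) {c : ℝ} (hc : 0 < c) :
    ∃ N : ℕ, 0 < N ∧ ∀ i, 0 < (w i - c) / N + c := by
  obtain ⟨N, hN⟩ := exists_nat_gt (1 + (∑ i, |w i|) / c)
  have hN₀ : (0 : ℝ) < N := lt_of_le_of_lt (by positivity) hN
  refine ⟨N, by exact_mod_cast hN₀, fun i => ?_⟩
  have hNc : c + ∑ i, |w i| < N * c := by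
    simpa [add_mul, div_mul_cancel₀ _ hc.ne'] using mul_lt_mul_of_pos_right hN hc
  have hwi : -w i ≤ ∑ i, |w i| :=
    (neg_le_abs _).trans (single_le_sum (fun i _ => abs_nonneg (w i)) (mem_univ i))
  calc 0 < (w i - c + N * c) / N := div_pos (by linarith) hN₀
    _ = (w i - c) / N + c := by field_simp

theorem Submodule.ratCast_smul_mem {K V : Type*} [DivisionRing K] [AddCommGroup V] [Module K V]
    [Module ℚ V] (VQ : Submodule ℚ V) (q : ℚ) {v : V} (hv : v ∈ VQ) : (q : K) • v ∈ VQ := by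
  rw [ratCast_smul_eq K ℚ, Rat.cast_id]
  exact VQ.smul_mem q hv

section Rational

variable {V : Type*} [AddCommGroup V] [Module ℝ V] [Module ℚ V] {VQ : Submodule ℚ V}

def IsRationalAffineSubspace (VQ : Submodule ℚ V) (A : AffineSubspace ℝ V) : Prop :=
  ∃ S ⊆ (VQ : Set V), A = affineSpan ℝ S

theorem exists_pos_weights_of_affineIndependent {W : AffineSubspace ℝ V} {ι : Type*} [Fintype ι]
    [Nonempty ι] {Q : ι → V} (hQ : AffineIndependent ℝ Q) (hQW : ∀ i, Q i ∈ W)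
    (hQVQ : ∀ i, Q i ∈ VQ) {w : ι → ℝ} (hw : ∑ i, w i = 1) :
    ∃ (Q' : ι → V) (w' : ι → ℝ), AffineIndependent ℝ Q' ∧ (∀ i, Q' i ∈ W ∧ Q' i ∈ VQ) ∧
      (∀ i, 0 < w' i) ∧ ∑ i, w' i = 1 ∧ ∑ i, w i • Q i = ∑ i, w' i • Q' i := by
  set m := Fintype.card ι
  have hm : (m : ℝ) ≠ 0 := by positivity
  have hc : ∑ _i : ι, (m : ℝ)⁻¹ = 1 := by simp [m, hm]
  set B := ∑ i, (m : ℝ)⁻¹ • Q i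
  have hBW : B ∈ W := affineSpan_le.mpr (range_subset_iff.mpr hQW) (sum_smul_mem_affineSpan Q hc)
  have hBVQ : B ∈ VQ := VQ.sum_mem fun i _ => by
    simpa using VQ.ratCast_smul_mem (K := ℝ) (m : ℚ)⁻¹ (hQVQ i)
  obtain ⟨N, hN, hpos⟩ := exists_nat_forall_pos w (c := (m : ℝ)⁻¹) (by positivity)
  have hN' : (N : ℝ) ≠ 0 := by positivity
  set h := AffineMap.homothety B (N : ℝ)
  -- the barycentric coordinates of `h⁻¹ (∑ i, w i • Q i)` with respect to `Q`
  set w' : ι → ℝ := fun i => (w i - (m : ℝ)⁻¹) / N + (m : ℝ)⁻¹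
  have hw' : ∑ i, w' i = 1 := by
    simp only [w', sum_add_distrib, ← sum_div, sum_sub_distrib, hw, hc, sub_self, zero_div,
      zero_add]
  have hw'Q : ∑ i, w' i • Q i = (N : ℝ)⁻¹ • (∑ i, w i • Q i - B) + B := by
    simp only [w', B, add_smul, sub_smul, div_eq_inv_mul, mul_smul, sum_add_distrib,
      sum_sub_distrib, smul_sub, ← smul_sum]
  refine ⟨h ∘ Q, w', hQ.map' h (AffineMap.homothety_injective B hN'), fun i => ⟨?_, ?_⟩, hpos,
    hw', ?_⟩
  · exact AffineMap.homothety_mem hBW _ (hQW i)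
  · simp only [Function.comp_apply, h, AffineMap.homothety_apply, vsub_eq_sub, vadd_eq_add]
    simpa using VQ.add_mem (VQ.ratCast_smul_mem (K := ℝ) (N : ℚ) (VQ.sub_mem (hQVQ i) hBVQ)) hBVQ
  · simp only [Function.comp_apply]
    rw [← AffineMap.map_sum_smul h Q hw', hw'Q, AffineMap.homothety_apply, vsub_eq_sub,
      vadd_eq_add, add_sub_cancel_right, smul_inv_smul₀ hN', sub_add_cancel]

variable {P : V} {W : AffineSubspace ℝ V} {ι : Type*} [Fintype ι] {Q : ι → V} {w : ι → ℝ}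

theorem eq_zero_of_sum_mul_eq_zero_of_minimal
    (hW : ∀ A : AffineSubspace ℝ V, P ∈ A → IsRationalAffineSubspace VQ A → W ≤ A)
    (hQ : AffineIndependent ℝ Q) (hQW : ∀ i, Q i ∈ W) (hQVQ : ∀ i, Q i ∈ VQ)
    (hw : ∑ i, w i = 1) (hP : P = ∑ i, w i • Q i) {g : ι → ℚ} (hg : ∑ i, (g i : ℝ) * w i = 0)
    {j k : ι} (hjk : g j ≠ g k) (i₀ : ι) : g i₀ = 0 := by
  classical
  set c : ι → ℚ := fun i => g i / (g j - g k)
  have hjk' : ((g j : ℝ) - g k) ≠ 0 := by exact_mod_cast sub_ne_zero.mpr hjk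
  have hgc : ∀ i, (g i : ℝ) = c i * (g j - g k) := fun i => by
    simp only [c, Rat.cast_div, Rat.cast_sub, div_mul_cancel₀ _ hjk']
  -- `b l` are the barycentric coordinates of the rational point `Q l + c l • (Q k - Q j)`,
  -- at which the affine function with values `g` at `Q` vanishes
  set b : ι → ι → ℝ := fun l => Pi.single l 1 + (c l : ℝ) • (Pi.single k 1 - Pi.single j 1)
  have hX : ∀ l, ∑ i, b l i • Q i = Q l + (c l : ℝ) • (Q k - Q j) := fun l => by
    simp [b, add_smul, sub_smul, sum_add_distrib, sum_sub_distrib, Pi.single_apply, smul_sub]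
  have hb : ∀ l, ∑ i, b l i = 1 := fun l => by
    simp [b, sum_add_distrib, sum_sub_distrib, ← mul_sum]
  have hbg : ∀ l, ∑ i, (g i : ℝ) * b l i = 0 := fun l => by
    simp only [b, Pi.add_apply, Pi.smul_apply, Pi.sub_apply, Pi.single_apply, smul_eq_mul,
      mul_add, mul_sub, mul_ite, mul_one, mul_zero, sum_add_distrib, sum_sub_distrib, sum_ite_eq',
      Finset.mem_univ, if_true]
    linear_combination hgc l
  have hwc : ∑ i, w i * c i = 0 := by
    refine (mul_eq_zero.mp ?_).resolve_right hjk'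
    rw [← hg, sum_mul]
    exact sum_congr rfl fun i _ => by rw [hgc i]; ring
  have hPX : P = ∑ l, w l • ∑ i, b l i • Q i := by
    simp only [hX, smul_add, sum_add_distrib, ← hP, smul_smul, ← sum_smul, hwc, zero_smul,
      add_zero]
  have hXVQ : ∀ l, ∑ i, b l i • Q i ∈ VQ := fun l => by
    rw [hX]
    exact VQ.add_mem (hQVQ l) (VQ.ratCast_smul_mem _ (VQ.sub_mem (hQVQ k) (hQVQ j)))
  have hWX : W ≤ affineSpan ℝ (range fun l => ∑ i, b l i • Q i) :=
    hW _ (hPX ▸ sum_smul_mem_affineSpan _ hw) ⟨_, range_subset_iff.mpr hXVQ, rfl⟩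
  exact_mod_cast hQ.eq_zero_of_mem_affineSpan hb hbg (hWX (hQW i₀))

theorem linearIndependent_rat_of_minimal
    (hW : ∀ A : AffineSubspace ℝ V, P ∈ A → IsRationalAffineSubspace VQ A → W ≤ A)
    (hQ : AffineIndependent ℝ Q) (hQW : ∀ i, Q i ∈ W) (hQVQ : ∀ i, Q i ∈ VQ)
    (hw : ∑ i, w i = 1) (hP : P = ∑ i, w i • Q i) : LinearIndependent ℚ w := by
  rw [Fintype.linearIndependent_iff]
  intro g hg
  replace hg : ∑ i, (g i : ℝ) * w i = 0 := by simpa only [Rat.smul_def] using hg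
  by_cases hconst : ∀ j k, g j = g k
  · intro i
    have : (g i : ℝ) * ∑ j, w j = 0 := by
      rw [mul_sum, ← hg]
      exact sum_congr rfl fun j _ => by rw [hconst i j]
    simpa [hw] using this
  · obtain ⟨j, k, hjk⟩ : ∃ j k, g j ≠ g k := by simpa using hconst
    exact eq_zero_of_sum_mul_eq_zero_of_minimal hW hQ hQW hQVQ hw hP hg hjk

end Rational

theorem stmt0_general {V : Type*} [AddCommGroup V] [Module ℝ V] [Module ℚ V]
    [FiniteDimensional ℝ V]
    (VQ : Submodule ℚ V)
    (P : V) (W : AffineSubspace ℝ V)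
    (hPW : P ∈ W)
    (hWrat : ∃ S ⊆ (VQ : Set V), W = affineSpan ℝ S)
    (hWmin : ∀ A : AffineSubspace ℝ V, P ∈ A → (∃ S ⊆ (VQ : Set V), A = affineSpan ℝ S) →
      W ≤ A) :
    ∃ (n : ℕ) (Pi : Fin n → V) (r : Fin n → ℝ),
      n = Module.finrank ℝ W.direction + 1 ∧
      (∀ i, Pi i ∈ W ∧ Pi i ∈ VQ) ∧
      (∀ i, 0 < r i) ∧
      P = ∑ i, r i • Pi i ∧
      LinearIndependent ℚ r := by
  obtain ⟨S, hSVQ, rfl⟩ := hWrat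
  obtain ⟨m, Q, hQ, hQS, hQspan⟩ := exists_affineIndependent_fin (k := ℝ) S
  rw [← hQspan] at hPW hWmin ⊢
  have hQW : ∀ i, Q i ∈ affineSpan ℝ (range Q) := fun i => subset_affineSpan ℝ _ (mem_range_self i)
  have hQVQ : ∀ i, Q i ∈ VQ := fun i => hSVQ (hQS (mem_range_self i))
  obtain ⟨n, rfl⟩ : ∃ n, m = n + 1 := Nat.exists_eq_add_one.mpr <| Fin.pos_iff_nonempty.mpr <|
    range_nonempty_iff_nonempty.mp ((affineSpan_nonempty ℝ).mp ⟨P, hPW⟩)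
  obtain ⟨w, hw, rfl⟩ := exists_sum_smul_eq_of_mem_affineSpan hPW
  obtain ⟨Q', w', hQ', hQ'W, hw'pos, hw', hP⟩ :=
    exists_pos_weights_of_affineIndependent hQ hQW hQVQ hw
  refine ⟨n + 1, Q', w', ?_, hQ'W, hw'pos, hP, ?_⟩
  · rw [direction_affineSpan, hQ.finrank_vectorSpan (Fintype.card_fin _)]
  · exact linearIndependent_rat_of_minimal hWmin hQ' (fun i => (hQ'W i).1) (fun i => (hQ'W i).2)
      hw' hP

/-- rational structure, minimal rational affine subspace `W` containing `P`.
If the linear span of `W` strictly contains `W`, then `P = ∑ rᵢ Pᵢ` with `Pᵢ ∈ W ∩ V_ℚ`,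
`rᵢ > 0`, `n = dim W + 1`, and the `rᵢ` linearly independent over `ℚ`. -/
theorem stmt0 {V : Type*} [AddCommGroup V] [Module ℝ V] [Module ℚ V]
    [IsScalarTower ℚ ℝ V] [FiniteDimensional ℝ V]
    (VQ : Submodule ℚ V)
    -- rational structure: VQ spans V over ℝ and ℚ-independent rational vectors are ℝ-independent
    (hspan : Submodule.span ℝ (VQ : Set V) = ⊤)
    (hli : ∀ {ι : Type} (v : ι → V), (∀ i, v i ∈ VQ) → LinearIndependent ℚ v →
      LinearIndependent ℝ v)
    (P : V) (W : AffineSubspace ℝ V)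
    (hPW : P ∈ W)
    (hWrat : ∃ S ⊆ (VQ : Set V), W = affineSpan ℝ S)
    (hWmin : ∀ A : AffineSubspace ℝ V, P ∈ A → (∃ S ⊆ (VQ : Set V), A = affineSpan ℝ S) →
      W ≤ A)
    -- the linear span of W strictly contains W, i.e. W is not a linear subspace
    (hWU : (↑(Submodule.span ℝ (W : Set V)) : Set V) ≠ (W : Set V)) :
    ∃ (n : ℕ) (Pi : Fin n → V) (r : Fin n → ℝ),
      n = Module.finrank ℝ W.direction + 1 ∧
      (∀ i, Pi i ∈ W ∧ Pi i ∈ VQ) ∧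
      (∀ i, 0 < r i) ∧
      P = ∑ i, r i • Pi i ∧
      LinearIndependent ℚ r :=
  stmt0_general VQ P W hPW hWrat hWmin
end

section
/- Let V be a finite-dimensional real vector space with rational structure V_Q and let P ∈ V with smallest rational affine subspace W containing P. For every δ > 0 and every norm ‖·‖ on V, one can choose rational points P_1, …, P_n ∈ W ∩ V_Q and positive reals r_1, …, r_n, linearly independent over Q, with P = Σ r_i P_i and ‖P − P_i‖ < δ for every i. -/
/-!
Pick a rational point `Q₀ ∈ W` and a basis `v₁, …, v_d` of the direction of `W` made of rational
vectors, and write `P = Q₀ + ∑ tⱼ vⱼ`. Minimality of `W` forces `1, t₁, …, t_d` to be linearly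
independent over `ℚ`: a rational relation among them cuts out a rational hyperplane of `W` through
`P`, and that hyperplane is the affine span of its rational points.

Now let `m = ⌊N t⌋` and `θ = fract (N t)`. The point `t` lies in the rational simplex with vertices
`m / N` and `m / N + ((d + 1) / N) eⱼ`, of diameter `O(d / N)`, with barycentric coordinates
`1 - ∑ θⱼ / (d + 1)` and `θⱼ / (d + 1)`. These are positive because the `tⱼ` are irrational, and
linearly independent over `ℚ` because they are the image of `(1, t₁, …, t_d)` under an invertible
rational matrix.
-/

open Finset

noncomputable def ratPoints (ι : Type*) : Submodule ℚ (ι → ℝ) :=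
  LinearMap.range ((Algebra.linearMap ℚ ℝ).compLeft ι)

theorem mem_ratPoints {ι : Type*} {x : ι → ℝ} :
    x ∈ ratPoints ι ↔ ∃ s : ι → ℚ, (fun j => (s j : ℝ)) = x :=
  Iff.rfl

theorem ratCast_mem_ratPoints {ι : Type*} (s : ι → ℚ) : (fun j => (s j : ℝ)) ∈ ratPoints ι :=
  mem_ratPoints.2 ⟨s, rfl⟩

theorem single_mem_ratPoints {ι : Type*} [DecidableEq ι] (j : ι) (q : ℚ) :
    Pi.single j (q : ℝ) ∈ ratPoints ι := by
  convert ratCast_mem_ratPoints (Pi.single j q) using 1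
  ext k
  exact (Pi.apply_single (fun _ (x : ℚ) => (x : ℝ)) (fun _ => Rat.cast_zero) j q k).symm

theorem mem_affineSpan_ratPoints_of_sum_mul_eq {ι : Type*} [Fintype ι] {a : ι → ℚ} (ha : a ≠ 0)
    {a₀ : ℚ} {c : ι → ℝ} (hc : ∑ j, (a j : ℝ) * c j = a₀) :
    c ∈ affineSpan ℝ {x | x ∈ ratPoints ι ∧ ∑ j, (a j : ℝ) * x j = a₀} := by
  classical
  obtain ⟨j₀, hj₀⟩ : ∃ j, a j ≠ 0 := Function.ne_iff.mp ha
  set H := {x : ι → ℝ | x ∈ ratPoints ι ∧ ∑ j, (a j : ℝ) * x j = a₀}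
  set p : ι → ℝ := Pi.single j₀ ((a₀ / a j₀ : ℚ) : ℝ)
  set k : ι → ι → ℝ := fun j => Pi.single j ((1 : ℚ) : ℝ) - Pi.single j₀ ((a j / a j₀ : ℚ) : ℝ)
  have hp : p ∈ H := ⟨single_mem_ratPoints _ _, by simp [p, Pi.single_apply]; field_simp⟩
  have hk : ∀ j, k j +ᵥ p ∈ H := fun j =>
    ⟨add_mem (sub_mem (single_mem_ratPoints _ _) (single_mem_ratPoints _ _))
      (single_mem_ratPoints _ _), by
        simp [k, p, Pi.single_apply, mul_sub, mul_add, sum_add_distrib, sum_sub_distrib]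
        field_simp; ring⟩
  have hc_eq : c = (∑ j, c j • k j) +ᵥ p := by
    ext i
    simp only [k, p, vadd_eq_add, Pi.add_apply, Finset.sum_apply, Pi.smul_apply, Pi.sub_apply,
      Pi.single_apply, smul_eq_mul, mul_sub, sum_sub_distrib, mul_ite, mul_zero,
      sum_ite_eq, mem_univ, if_true]
    split_ifs
    · have hsum : ∑ j, c j * ((a j : ℝ) / a j₀) = a₀ / a j₀ := by
        rw [← hc, sum_div]
        exact sum_congr rfl fun j _ => by ring
      push_cast
      rw [hsum]
      ring
    · simp
  rw [hc_eq]
  refine AffineSubspace.vadd_mem_of_mem_direction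
    (Submodule.sum_mem _ fun j _ => Submodule.smul_mem _ _ ?_) (subset_affineSpan ℝ H hp)
  simpa using AffineSubspace.vsub_mem_direction (subset_affineSpan ℝ H (hk j))
    (subset_affineSpan ℝ H hp)

/-- Equivalently, `1, t₁, …, tₙ` are linearly independent over `ℚ`. -/
def AvoidsRationalHyperplanes {ι : Type*} [Fintype ι] (t : ι → ℝ) : Prop :=
  ∀ (a : ι → ℚ) (a₀ : ℚ), ∑ j, (a j : ℝ) * t j = a₀ → a = 0

namespace AvoidsRationalHyperplanes

variable {ι : Type*} [Fintype ι] {t : ι → ℝ}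

theorem irrational (ht : AvoidsRationalHyperplanes t) (j : ι) : Irrational (t j) := by
  classical
  rintro ⟨q, hq⟩
  have h := ht (Pi.single j 1) q (by simp [Pi.single_apply, apply_ite (Rat.cast : ℚ → ℝ), hq])
  simpa using congrFun h j

theorem of_eq_mul_add (ht : AvoidsRationalHyperplanes t) {q : ℚ} (hq : q ≠ 0) (m : ι → ℚ)
    {t' : ι → ℝ} (h : ∀ j, t' j = q * t j + m j) : AvoidsRationalHyperplanes t' := by
  intro a a₀ ha
  have hrel : ∑ j, ((a j * q : ℚ) : ℝ) * t j = ((a₀ - ∑ j, a j * m j : ℚ) : ℝ) := by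
    simp only [h, mul_add, sum_add_distrib] at ha
    push_cast
    rw [← ha]
    simp only [mul_assoc, add_sub_cancel_right]
  funext j
  simpa [hq] using congrFun (ht _ _ hrel) j

theorem linearIndependent_cons {d : ℕ} {w : Fin d → ℝ} (hw : AvoidsRationalHyperplanes w) :
    LinearIndependent ℚ (Fin.cons (1 - ∑ j, w j) w : Fin (d + 1) → ℝ) := by
  rw [Fintype.linearIndependent_iff]
  intro g hg
  simp only [Fin.sum_univ_succ, Fin.cons_zero, Fin.cons_succ, Rat.smul_def] at hg
  have hsucc : (fun j : Fin d => g j.succ - g 0) = 0 := by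
    refine hw _ (-g 0) ?_
    push_cast
    simp only [sub_mul, sum_sub_distrib, ← mul_sum]
    linear_combination hg
  have hg0 : g 0 = 0 := by
    have hrel : ∑ j, (g j.succ : ℝ) * w j = g 0 * ∑ j, w j := by
      rw [mul_sum]
      exact sum_congr rfl fun j _ => by rw [sub_eq_zero.mp (congrFun hsucc j)]
    exact_mod_cast (by linear_combination hg - hrel : (g 0 : ℝ) = 0)
  intro i
  induction i using Fin.cases with
  | zero => exact hg0
  | succ j => rw [sub_eq_zero.mp (congrFun hsucc j), hg0]

end AvoidsRationalHyperplanes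

theorem sum_cons_smul_cons {R M : Type*} [Ring R] [AddCommGroup M] [Module R M] {d : ℕ}
    (w : Fin d → R) (b : M) (u : Fin d → M) :
    ∑ i, (Fin.cons (1 - ∑ j, w j) w : Fin (d + 1) → R) i •
      (Fin.cons b (fun j => b + u j) : Fin (d + 1) → M) i = b + ∑ j, w j • u j := by
  simp only [Fin.sum_univ_succ, Fin.cons_zero, Fin.cons_succ, smul_add, sum_add_distrib, sub_smul,
    one_smul, ← sum_smul]
  abel

theorem dist_floor_mul_div_le {ι : Type*} [Fintype ι] (t : ι → ℝ) {N : ℕ} (hN : 0 < N) :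
    dist (fun j => (⌊N * t j⌋ : ℝ) / N) t ≤ 1 / N := by
  refine (dist_pi_le_iff (by positivity)).2 fun j => ?_
  have h : (⌊N * t j⌋ : ℝ) / N - t j = -(Int.fract (N * t j) / N) := by
    rw [Int.fract]; field_simp; ring
  rw [Real.dist_eq, h, abs_neg, abs_of_nonneg (by positivity)]
  gcongr
  exact (Int.fract_lt_one _).le

theorem sum_fract_div_lt_one {d : ℕ} (s : Fin d → ℝ) : ∑ j, Int.fract (s j) / (d + 1) < 1 :=
  calc ∑ j, Int.fract (s j) / (d + 1) ≤ ∑ _j : Fin d, 1 / ((d : ℝ) + 1) :=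
        sum_le_sum fun j _ => div_le_div_of_nonneg_right (Int.fract_lt_one _).le (by positivity)
    _ = d / (d + 1) := by simp [div_eq_mul_inv]
    _ < 1 := by rw [div_lt_one (by positivity)]; linarith

theorem AvoidsRationalHyperplanes.exists_simplex_ratPoints {d : ℕ} {t : Fin d → ℝ}
    (ht : AvoidsRationalHyperplanes t) {ε : ℝ} (hε : 0 < ε) :
    ∃ (x : Fin (d + 1) → Fin d → ℝ) (r : Fin (d + 1) → ℝ), (∀ i, x i ∈ ratPoints (Fin d)) ∧
      (∀ i, 0 < r i) ∧ LinearIndependent ℚ r ∧ ∑ i, r i = 1 ∧ ∑ i, r i • x i = t ∧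
      ∀ i, dist (x i) t < ε := by
  obtain ⟨N, hN⟩ := exists_nat_gt ((d + 2) / ε)
  have hN₀ : 0 < N := by exact_mod_cast (by positivity : (0 : ℝ) < (d + 2) / ε).trans hN
  set b : Fin d → ℝ := fun j => (⌊N * t j⌋ : ℝ) / N
  set w : Fin d → ℝ := fun j => Int.fract (N * t j) / (d + 1)
  set u : Fin d → Fin d → ℝ := fun j => Pi.single j (((d + 1) / N : ℚ) : ℝ)
  set x : Fin (d + 1) → Fin d → ℝ := Fin.cons b fun j => b + u j
  have hw : AvoidsRationalHyperplanes w :=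
    ht.of_eq_mul_add (q := N / (d + 1)) (by positivity) (fun j => -⌊N * t j⌋ / (d + 1))
      fun j => by simp only [w, Int.fract]; push_cast; ring
  have hw_pos : ∀ j, 0 < w j := fun j =>
    lt_of_le_of_ne (by positivity) (hw.irrational j).ne_zero.symm
  have hb : b ∈ ratPoints (Fin d) := by
    convert ratCast_mem_ratPoints (fun j => (⌊N * t j⌋ : ℚ) / N) using 1
    ext; push_cast; rfl
  have hu_dist : ∀ j, dist (b + u j) b = (d + 1) / N := by
    intro j
    rw [dist_self_add_left, Pi.norm_single, Real.norm_eq_abs, abs_of_pos (by positivity)]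
    push_cast
    rfl
  refine ⟨x, Fin.cons (1 - ∑ j, w j) w, ?_, ?_,
    hw.linearIndependent_cons, ?_, ?_, ?_⟩
  · intro i
    induction i using Fin.cases with
    | zero => exact hb
    | succ j => exact add_mem hb (single_mem_ratPoints _ _)
  · intro i
    induction i using Fin.cases with
    | zero => exact sub_pos.2 (sum_fract_div_lt_one _)
    | succ j => exact hw_pos j
  · simp [Fin.sum_univ_succ]
  · rw [sum_cons_smul_cons]
    ext j
    simp only [u, b, w, Pi.add_apply, Finset.sum_apply, Pi.smul_apply, Pi.single_apply,
      smul_eq_mul, mul_ite, mul_zero, sum_ite_eq, mem_univ, if_true]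
    push_cast
    field_simp
    exact Int.floor_add_fract _
  · intro i
    have hx_dist : dist (x i) b ≤ (d + 1) / N := by
      induction i using Fin.cases with
      | zero => simp only [x, Fin.cons_zero, dist_self]; positivity
      | succ j => exact (hu_dist j).le
    calc dist (x i) t ≤ dist (x i) b + dist b t := dist_triangle _ _ _
      _ ≤ (d + 1) / N + 1 / N := add_le_add hx_dist (dist_floor_mul_div_le t hN₀)
      _ = (d + 2) / N := by ring
      _ < ε := by rwa [div_lt_comm₀ (by positivity) hε]

section RationalStructure

variable {V : Type*} [AddCommGroup V] [Module ℝ V] [Module ℚ V] (VQ : Submodule ℚ V)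

theorem exists_affineMap_ratPoints_of_subset [IsScalarTower ℚ ℝ V] [FiniteDimensional ℝ V]
    {S : Set V} (hSQ : S ⊆ VQ) (hS : S.Nonempty) :
    ∃ (d : ℕ) (f : (Fin d → ℝ) →ᵃ[ℝ] V), Function.Injective f ∧
      Set.range f = affineSpan ℝ S ∧ ∀ x ∈ ratPoints (Fin d), f x ∈ VQ := by
  obtain ⟨Q₀, hQ₀⟩ := hS
  obtain ⟨b, hbS, hb_span, hb_li⟩ := exists_linearIndependent ℝ ((· -ᵥ Q₀) '' S)
  have : Finite b := hb_li.setFinite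
  obtain ⟨d, ⟨e⟩⟩ := Finite.exists_equiv_fin b
  set v : Fin d → V := fun j => e.symm j
  have hv_span : Submodule.span ℝ (Set.range v) = (affineSpan ℝ S).direction := by
    rw [direction_affineSpan, vectorSpan_eq_span_vsub_set_right ℝ hQ₀, ← hb_span,
      show v = Subtype.val ∘ e.symm from rfl, e.symm.surjective.range_comp, Subtype.range_coe]
  have hv_Q : ∀ j, v j ∈ VQ := fun j => by
    obtain ⟨x, hx, hxv⟩ := hbS (e.symm j).2
    change (e.symm j : V) ∈ VQ
    rw [← hxv]
    exact VQ.sub_mem (hSQ hx) (hSQ hQ₀)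
  set L := Fintype.linearCombination ℝ v
  refine ⟨d, L.toAffineMap + AffineMap.const ℝ _ Q₀, fun x y h => ?_, ?_, ?_⟩
  · exact linearIndependent_iff_injective_fintypeLinearCombination.1
      (hb_li.comp _ e.symm.injective) (add_right_cancel h)
  · ext p
    rw [SetLike.mem_coe, ← AffineSubspace.mk'_eq (subset_affineSpan ℝ S hQ₀),
      AffineSubspace.mem_mk', ← hv_span, ← Fintype.range_linearCombination, LinearMap.mem_range,
      vsub_eq_sub]
    simp [L, eq_sub_iff_add_eq]
  · intro x hx
    obtain ⟨s, rfl⟩ := mem_ratPoints.1 hx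
    simp only [AffineMap.coe_add, Pi.add_apply, LinearMap.coe_toAffineMap, AffineMap.const_apply,
      L, Fintype.linearCombination_apply]
    refine VQ.add_mem (VQ.sum_mem fun j _ => ?_) (hSQ hQ₀)
    rw [Rat.cast_smul_eq_qsmul]
    exact VQ.smul_mem _ (hv_Q j)

theorem avoidsRationalHyperplanes_of_minimal {ι : Type*} [Fintype ι] {W : AffineSubspace ℝ V}
    {P : V}
    (hWmin : ∀ A : AffineSubspace ℝ V, P ∈ A → (∃ S ⊆ (VQ : Set V), A = affineSpan ℝ S) → W ≤ A)
    (f : (ι → ℝ) →ᵃ[ℝ] V) (hf : Function.Injective f) (hfW : Set.range f ⊆ W)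
    (hfQ : ∀ x ∈ ratPoints ι, f x ∈ VQ) {t : ι → ℝ} (ht : f t = P) :
    AvoidsRationalHyperplanes t := by
  classical
  intro a a₀ hrel
  by_contra ha
  obtain ⟨j₀, hj₀⟩ : ∃ j, a j ≠ 0 := Function.ne_iff.mp ha
  set H := {x : ι → ℝ | x ∈ ratPoints ι ∧ ∑ j, (a j : ℝ) * x j = a₀}
  set ℓ : (ι → ℝ) →ᵃ[ℝ] ℝ := (Fintype.linearCombination ℝ fun j => (a j : ℝ)).toAffineMap
  have hℓ : ∀ x, ℓ x = ∑ j, (a j : ℝ) * x j := fun x => by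
    simp [ℓ, Fintype.linearCombination_apply, mul_comm]
  have hH : affineSpan ℝ H ≤ (affineSpan ℝ {(a₀ : ℝ)}).comap ℓ := affineSpan_le.2 fun x hx => by
    simp [hℓ, hx.2]
  have hWH : W ≤ (affineSpan ℝ H).map f := by
    rw [AffineSubspace.map_span]
    refine hWmin _ ?_ ⟨f '' H, Set.image_subset_iff.2 fun x hx => hfQ x hx.1, rfl⟩
    rw [← AffineSubspace.map_span, ← ht]
    exact AffineSubspace.mem_map_of_mem f (mem_affineSpan_ratPoints_of_sum_mul_eq ha hrel)
  obtain ⟨c, hc, hfc⟩ := AffineSubspace.mem_map.1 (hWH (hfW ⟨t + Pi.single j₀ 1, rfl⟩))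
  have h := AffineSubspace.mem_comap.1 (hH hc)
  rw [hf hfc, AffineSubspace.mem_affineSpan_singleton, hℓ] at h
  simp [mul_add, sum_add_distrib, hrel, Pi.single_apply] at h
  exact hj₀ h

end RationalStructure

theorem stmt2_general {V : Type*} [NormedAddCommGroup V] [NormedSpace ℝ V] [Module ℚ V]
    [IsScalarTower ℚ ℝ V] [FiniteDimensional ℝ V]
    (VQ : Submodule ℚ V)
    (P : V) (W : AffineSubspace ℝ V)
    (hPW : P ∈ W)
    (hWrat : ∃ S ⊆ (VQ : Set V), W = affineSpan ℝ S)
    (hWmin : ∀ A : AffineSubspace ℝ V, P ∈ A → (∃ S ⊆ (VQ : Set V), A = affineSpan ℝ S) →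
      W ≤ A)
    (δ : ℝ) (hδ : 0 < δ) :
    ∃ (n : ℕ) (Pi : Fin n → V) (r : Fin n → ℝ),
      (∀ i, Pi i ∈ W ∧ Pi i ∈ VQ) ∧
      (∀ i, 0 < r i) ∧
      LinearIndependent ℚ r ∧
      P = ∑ i, r i • Pi i ∧
      (∀ i, ‖P - Pi i‖ < δ) := by
  obtain ⟨S, hSQ, rfl⟩ := hWrat
  obtain ⟨d, f, hf, hf_range, hfQ⟩ :=
    exists_affineMap_ratPoints_of_subset VQ hSQ ((affineSpan_nonempty ℝ).1 ⟨P, hPW⟩)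
  obtain ⟨t, rfl⟩ : P ∈ Set.range f := hf_range ▸ hPW
  have ht := avoidsRationalHyperplanes_of_minimal VQ hWmin f hf hf_range.subset hfQ rfl
  obtain ⟨ε, hε, hfε⟩ :=
    Metric.continuousAt_iff.1 f.continuous_of_finiteDimensional.continuousAt δ hδ
  obtain ⟨x, r, hxQ, hr_pos, hr_li, hr_sum, hrx, hx_dist⟩ := ht.exists_simplex_ratPoints hε
  refine ⟨d + 1, f ∘ x, r, fun i => ⟨hf_range.subset ⟨x i, rfl⟩, hfQ _ (hxQ i)⟩, hr_pos, hr_li,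
    ?_, fun i => ?_⟩
  · rw [← hrx, ← affineCombination_eq_linear_combination _ _ _ hr_sum,
      map_affineCombination _ _ _ hr_sum, affineCombination_eq_linear_combination _ _ _ hr_sum]
  · rw [← dist_eq_norm, dist_comm]
    exact hfε (hx_dist i)

/-- the rational decomposition `P = ∑ rᵢ Pᵢ` with `Pᵢ ∈ W ∩ V_ℚ` and the `rᵢ > 0`
ℚ-linearly independent can be chosen with `‖P − Pᵢ‖ < δ` for every `i`. -/
theorem stmt2 {V : Type*} [NormedAddCommGroup V] [NormedSpace ℝ V] [Module ℚ V]
    [IsScalarTower ℚ ℝ V] [FiniteDimensional ℝ V]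
    (VQ : Submodule ℚ V)
    (hspan : Submodule.span ℝ (VQ : Set V) = ⊤)
    (hli : ∀ {ι : Type} (v : ι → V), (∀ i, v i ∈ VQ) → LinearIndependent ℚ v →
      LinearIndependent ℝ v)
    (P : V) (W : AffineSubspace ℝ V)
    (hPW : P ∈ W)
    (hWrat : ∃ S ⊆ (VQ : Set V), W = affineSpan ℝ S)
    (hWmin : ∀ A : AffineSubspace ℝ V, P ∈ A → (∃ S ⊆ (VQ : Set V), A = affineSpan ℝ S) →
      W ≤ A)
    (δ : ℝ) (hδ : 0 < δ) :
    ∃ (n : ℕ) (Pi : Fin n → V) (r : Fin n → ℝ),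
      (∀ i, Pi i ∈ W ∧ Pi i ∈ VQ) ∧
      (∀ i, 0 < r i) ∧
      LinearIndependent ℚ r ∧
      P = ∑ i, r i • Pi i ∧
      (∀ i, ‖P - Pi i‖ < δ) :=
  stmt2_general VQ P W hPW hWrat hWmin δ hδ
end

section
/- Let D = P + N be a Fujita–Zariski decomposition of an ℝ-Cartier divisor D on a normal projective variety X, and let G be an ℝ-Cartier divisor with Supp G ⊆ Supp N and N + G ≥ 0. Then D + G = P + (N+G) is a Fujita–Zariski decomposition of D + G with positive part P. -/
/-!
Given a decomposition `f*(D + G) = P' + N'`, choose `c > 0` with `G ≤ c N`, which the support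
condition allows. Adding `c f*P + f*(c N - G)` gives the decomposition
`(1 + c) f*D = (P' + c f*P) + (N' + f*(c N - G))` with nef and effective parts, so maximality of
`P` (after dividing by `1 + c`) yields `P' + c f*P ≤ (1 + c) f*P`, i.e. `P' ≤ f*P`.
-/

/-- Abstract setup for Fujita–Zariski decompositions: ℝ-divisors on `X` are finitely
supported real functions on the set `X` of prime divisors; `M` indexes birational models
`W m → X`, each with its group of ℝ-divisors, a nef cone, and a linear pullback map.
`D = P + N` is a Fujita–Zariski decomposition if `P` is nef, `N ≥ 0`, and for every model
and every decomposition `f*D = P' + N'` with `P'` nef, `N' ≥ 0`, one has `P' ≤ f*P`. -/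
def IsFujitaZariski {X M : Type} {W : M → Type}
    (NefX : Set (X →₀ ℝ)) (Nef : ∀ m, Set (W m →₀ ℝ))
    (pull : ∀ m, (X →₀ ℝ) →ₗ[ℝ] (W m →₀ ℝ))
    (D P N : X →₀ ℝ) : Prop :=
  P ∈ NefX ∧ 0 ≤ N ∧ D = P + N ∧
    ∀ m, ∀ P' N' : W m →₀ ℝ, P' ∈ Nef m → 0 ≤ N' →
      pull m D = P' + N' → P' ≤ pull m P

theorem Finsupp.exists_pos_le_smul_of_support_subset {X 𝕜 : Type*} [Field 𝕜] [LinearOrder 𝕜]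
    [IsStrictOrderedRing 𝕜] {G N : X →₀ 𝕜} (hN : 0 ≤ N) (hsupp : G.support ⊆ N.support) :
    ∃ c : 𝕜, 0 < c ∧ G ≤ c • N := by
  obtain ⟨B, hB⟩ := ((G.support.image fun x => G x / N x).bddAbove)
  refine ⟨max B 1, by positivity, fun x => ?_⟩
  by_cases hx : x ∈ G.support
  · have hNx : 0 < N x := (hN x).lt_of_ne' (Finsupp.mem_support_iff.mp (hsupp hx))
    have hratio : G x / N x ≤ max B 1 :=
      (hB (Finset.mem_coe.mpr (Finset.mem_image_of_mem _ hx))).trans (le_max_left _ _)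
    simpa using (div_le_iff₀ hNx).mp hratio
  · rw [Finsupp.notMem_support_iff.mp hx]
    exact mul_nonneg (by positivity) (hN x)

namespace IsFujitaZariski

variable {X M : Type} {W : M → Type} {NefX : Set (X →₀ ℝ)} {Nef : ∀ m, Set (W m →₀ ℝ)}
  {pull : ∀ m, (X →₀ ℝ) →ₗ[ℝ] (W m →₀ ℝ)} {D P N : X →₀ ℝ}

theorem le_smul_pull_of_smul_pull_eq
    (hNefSmul : ∀ m, ∀ x ∈ Nef m, ∀ c : ℝ, 0 < c → c • x ∈ Nef m)
    (hFZ : IsFujitaZariski NefX Nef pull D P N) {m : M} {a : ℝ} (ha : 0 < a)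
    {Q E : W m →₀ ℝ} (hQ : Q ∈ Nef m) (hE : 0 ≤ E) (hdec : a • pull m D = Q + E) :
    Q ≤ a • pull m P := by
  have hdec' : pull m D = a⁻¹ • Q + a⁻¹ • E := by
    rw [← smul_add, ← hdec, inv_smul_smul₀ ha.ne']
  have hle := hFZ.2.2.2 m _ _ (hNefSmul m Q hQ _ (inv_pos.mpr ha))
    (smul_nonneg (inv_nonneg.mpr ha.le) hE) hdec'
  simpa [smul_inv_smul₀ ha.ne'] using smul_le_smul_of_nonneg_left hle ha.le

end IsFujitaZariski

/-- Lemma 6.1: if `D = P + N` is a Fujita–Zariski decomposition,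
`Supp G ⊆ Supp N` and `N + G ≥ 0`, then `D + G = P + (N + G)` is a Fujita–Zariski
decomposition with positive part `P`. -/
theorem stmt10 {X M : Type} {W : M → Type}
    (NefX : Set (X →₀ ℝ)) (Nef : ∀ m, Set (W m →₀ ℝ))
    (pull : ∀ m, (X →₀ ℝ) →ₗ[ℝ] (W m →₀ ℝ))
    (hNefAdd : ∀ m, ∀ x ∈ Nef m, ∀ y ∈ Nef m, x + y ∈ Nef m)
    (hNefSmul : ∀ m, ∀ x ∈ Nef m, ∀ c : ℝ, 0 < c → c • x ∈ Nef m)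
    (hpullNef : ∀ m, ∀ x ∈ NefX, pull m x ∈ Nef m)
    (hpullEff : ∀ m, ∀ x : X →₀ ℝ, 0 ≤ x → 0 ≤ pull m x)
    (D P N G : X →₀ ℝ)
    (hFZ : IsFujitaZariski NefX Nef pull D P N)
    (hsupp : G.support ⊆ N.support)
    (hNG : 0 ≤ N + G) :
    IsFujitaZariski NefX Nef pull (D + G) P (N + G) := by
  have ⟨hPnef, hN, hD, _⟩ := hFZ
  refine ⟨hPnef, hNG, by rw [hD, add_assoc], fun m P' N' hP' hN' hdec => ?_⟩
  obtain ⟨c, hc, hGc⟩ := Finsupp.exists_pos_le_smul_of_support_subset hN hsupp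
  have hscaled : (1 + c) • pull m D = (P' + c • pull m P) + (N' + pull m (c • N - G)) := by
    have hsplit : (1 + c) • D = (D + G) + c • P + (c • N - G) := by rw [hD]; module
    rw [← map_smul, hsplit, map_add, map_add, hdec, map_smul]
    abel
  have hle := hFZ.le_smul_pull_of_smul_pull_eq hNefSmul (by positivity : (0 : ℝ) < 1 + c)
    (hNefAdd m _ hP' _ (hNefSmul m _ (hpullNef m P hPnef) c hc))
    (add_nonneg hN' (hpullEff m _ (sub_nonneg.mpr hGc))) hscaled
  rw [add_smul, one_smul, add_comm (pull m P), add_comm P'] at hle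
  exact le_of_add_le_add_left hle
end
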